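/- arXiv:cs/0609081 — 5 statements merged into one kernel-verified Lean document; each statement's English description precedes it below -/
import Mathlib

section
/- If p_0,...,p_n are orthonormal polynomials on [a,b] for a weight w, then p_n has exactly n distinct real zeros, all lying in [a,b]. -/
open MeasureTheory Polynomial

/-- The degree-`n` orthonormal polynomial has exactly `n` distinct real zeros,
all lying in the interval of orthogonality. -/
theorem orthonormal_polynomial_has_n_distinct_zeros
    (a b : EReal) (hab : a < b) (n : ℕ) (hn : 0 < n)
    (w : ℝ → ℝ) (p : ℕ → Polynomial ℝ)
    (hw : ∀ x : ℝ, a < (x : EReal) → (x : EReal) < b → 0 ≤ w x)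
    (hInt : IntegrableOn w {x : ℝ | a < (x : EReal) ∧ (x : EReal) < b})
    (hdeg : ∀ k ≤ n, (p k).natDegree = k)
    (hlead : ∀ k ≤ n, 0 < (p k).leadingCoeff)
    (horth : ∀ j ≤ n, ∀ k ≤ n,
      (∫ x in {x : ℝ | a < (x : EReal) ∧ (x : EReal) < b},
        w x * (p j).eval x * (p k).eval x) = if j = k then 1 else 0) :
    ∃ x : Fin n → ℝ, Function.Injective x ∧
      (∀ k : Fin n, a < ((x k : ℝ) : EReal) ∧ ((x k : ℝ) : EReal) < b ∧
        (p n).eval (x k) = 0) ∧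
      (∀ t : ℝ, (p n).eval t = 0 → ∃ k : Fin n, x k = t) := by
  classical
  set S : Set ℝ := {x : ℝ | a < (x : EReal) ∧ (x : EReal) < b} with hS
  have hSm : MeasurableSet S := by
    have h1 : S = (fun x : ℝ => (x : EReal)) ⁻¹' (Set.Ioo a b) := rfl
    rw [h1]
    exact measurable_coe_real_ereal measurableSet_Ioo
  have hmemS : ∀ x : ℝ, x ∈ S → a < (x : EReal) ∧ (x : EReal) < b := by
    intro x hx; exact hx
  have hpn0 : p n ≠ 0 := leadingCoeff_ne_zero.mp (hlead n le_rfl).ne'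
  -- integrability of the diagonal products
  have hI2 : ∀ k ≤ n, IntegrableOn (fun x => w x * (p k).eval x * (p k).eval x) S := by
    intro k hk
    by_contra h
    have h2 := horth k hk k hk
    rw [if_pos rfl, MeasureTheory.integral_undef h] at h2
    exact zero_ne_one h2
  -- integrability of all cross products
  have hIjk : ∀ j ≤ n, ∀ k ≤ n,
      IntegrableOn (fun x => w x * (p j).eval x * (p k).eval x) S := by
    intro j hj k hk
    apply Integrable.mono' ((hI2 j hj).add (hI2 k hk))
    · exact (hInt.aestronglyMeasurable.mul
        ((p j).continuous.aestronglyMeasurable)).mul ((p k).continuous.aestronglyMeasurable)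
    · filter_upwards [ae_restrict_mem hSm] with x hx
      obtain ⟨hx1, hx2⟩ := hmemS x hx
      have hwx : 0 ≤ w x := hw x hx1 hx2
      rw [Real.norm_eq_abs, abs_le]
      simp only [Pi.add_apply]
      constructor <;>
        nlinarith [mul_nonneg hwx (sq_nonneg ((p j).eval x - (p k).eval x)),
          mul_nonneg hwx (sq_nonneg ((p j).eval x + (p k).eval x))]
  -- orthogonality to all lower-degree polynomials
  have key : ∀ d, d < n → ∀ r : Polynomial ℝ, r.natDegree ≤ d →
      IntegrableOn (fun x => w x * (p n).eval x * r.eval x) S ∧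
      (∫ x in S, w x * (p n).eval x * r.eval x) = 0 := by
    intro d
    induction d using Nat.strong_induction_on with
    | _ d IH =>
      intro hdn r hrd
      by_cases hr0 : r = 0
      · subst hr0
        simp only [eval_zero, mul_zero]
        exact ⟨integrable_zero _ _ _, integral_zero _ _⟩
      have h1 : (p d).coeff d ≠ 0 := by
        have := (hlead d hdn.le).ne'
        rwa [leadingCoeff, hdeg d hdn.le] at this
      set c : ℝ := r.coeff d / (p d).coeff d with hc
      set r' : Polynomial ℝ := r - C c * p d with hr'
      have hr'c : r'.coeff d = 0 := by
        simp only [hr', coeff_sub, coeff_C_mul, hc]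
        field_simp
        ring
      have hr'deg : r'.natDegree ≤ d := by
        refine le_trans (natDegree_sub_le _ _) (max_le hrd ?_)
        exact (natDegree_C_mul_le c (p d)).trans (hdeg d hdn.le).le
      have hres : IntegrableOn (fun x => w x * (p n).eval x * r'.eval x) S ∧
          (∫ x in S, w x * (p n).eval x * r'.eval x) = 0 := by
        by_cases h0 : r' = 0
        · rw [h0]
          simp only [eval_zero, mul_zero]
          exact ⟨integrable_zero _ _ _, integral_zero _ _⟩
        · have hne : r'.natDegree ≠ d := by
            intro hEq
            apply leadingCoeff_ne_zero.mpr h0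
            rw [leadingCoeff, hEq]; exact hr'c
          have hlt : r'.natDegree < d := lt_of_le_of_ne hr'deg hne
          exact IH r'.natDegree hlt (hlt.trans hdn) r' le_rfl
      have hpd : IntegrableOn (fun x => w x * (p n).eval x * (p d).eval x) S :=
        hIjk n le_rfl d hdn.le
      have hfeq : (fun x => w x * (p n).eval x * r.eval x)
          = fun x => c * (w x * (p n).eval x * (p d).eval x)
              + w x * (p n).eval x * r'.eval x := by
        funext x
        have hre : r.eval x = c * (p d).eval x + r'.eval x := by
          simp only [hr', eval_sub, eval_mul, eval_C]; ring
        rw [hre]; ring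
      constructor
      · rw [hfeq]; exact (hpd.const_mul c).add hres.1
      · rw [hfeq, integral_add (hpd.const_mul c) hres.1, integral_const_mul,
          horth n le_rfl d hdn.le, hres.2, if_neg hdn.ne']
        ring
  -- factor p n over its real roots
  obtain ⟨g, hg_eq, hg_card, hg_roots⟩ := (p n).exists_prod_multiset_X_sub_C_mul
  have hg0 : g ≠ 0 := by
    intro h; rw [h, mul_zero] at hg_eq; exact hpn0 hg_eq.symm
  have hgne : ∀ x : ℝ, g.eval x ≠ 0 := by
    intro x hx
    have hmem : x ∈ g.roots := (mem_roots hg0).mpr hx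
    rw [hg_roots] at hmem
    simp at hmem
  have hglc : 0 < g.leadingCoeff := by
    have h2 : (p n).leadingCoeff = g.leadingCoeff := by
      conv_lhs => rw [← hg_eq]
      rw [leadingCoeff_mul, (monic_multisetProd_X_sub_C (p n).roots).leadingCoeff, one_mul]
    rw [← h2]; exact hlead n le_rfl
  have hgpos : ∀ x : ℝ, 0 < g.eval x := by
    intro x
    rcases lt_or_ge 0 (g.eval x) with h | h
    · exact h
    exfalso
    have hxlt : g.eval x < 0 := lt_of_le_of_ne h (hgne x)
    have hy : ∃ y : ℝ, 0 < g.eval y := by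
      rcases Nat.eq_zero_or_pos g.natDegree with h0 | hdpos
      · refine ⟨0, ?_⟩
        have hce : g.eval 0 = g.leadingCoeff := by
          rw [leadingCoeff, h0, coeff_zero_eq_eval_zero]
        rw [hce]; exact hglc
      · have htend := g.tendsto_atTop_of_leadingCoeff_nonneg
          (natDegree_pos_iff_degree_pos.mp hdpos) hglc.le
        exact (htend.eventually_gt_atTop 0).exists
    obtain ⟨y, hy⟩ := hy
    have hmem : (0:ℝ) ∈ Set.uIcc (g.eval x) (g.eval y) :=
      Set.mem_uIcc.mpr (Or.inl ⟨hxlt.le, hy.le⟩)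
    obtain ⟨z, _, hz⟩ := intermediate_value_uIcc
      (Continuous.continuousOn g.continuous) hmem
    exact hgne z hz
  -- the candidate root set
  set T : Finset ℝ := (p n).roots.toFinset with hT
  set RS : Finset ℝ := T.filter
    (fun z => (a < (z : EReal) ∧ (z : EReal) < b) ∧ Odd ((p n).roots.count z)) with hRS
  set q : Polynomial ℝ := ∏ z ∈ RS, (X - C z) with hq
  have hq0 : q ≠ 0 := by
    rw [hq]
    exact (monic_prod_of_monic _ _ fun z _ => monic_X_sub_C z).ne_zero
  have hqdeg : q.natDegree = RS.card := by
    rw [hq, natDegree_prod _ _ (fun z _ => X_sub_C_ne_zero z)]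
    simp [natDegree_X_sub_C]
  set e : ℝ → ℕ := fun z => (p n).roots.count z + if z ∈ RS then 1 else 0 with he
  have heval : ∀ x : ℝ, (p n).eval x
      = (∏ z ∈ T, (x - z) ^ (p n).roots.count z) * g.eval x := by
    intro x
    conv_lhs => rw [← hg_eq]
    rw [eval_mul, eval_multiset_prod, Multiset.map_map]
    congr 1
    have hfun : ((eval x) ∘ fun a : ℝ => X - C a) = fun a : ℝ => x - a := by
      funext z; simp
    rw [hfun, Finset.prod_multiset_map_count, ← hT]
  have hqe : ∀ x : ℝ, q.eval x = ∏ z ∈ T, (x - z) ^ (if z ∈ RS then 1 else 0) := by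
    intro x
    rw [hq, eval_prod]
    simp only [eval_sub, eval_X, eval_C]
    rw [hRS, Finset.prod_filter]
    apply Finset.prod_congr rfl
    intro z hz
    simp only [Finset.mem_filter, hz, true_and]
    split_ifs <;> simp
  have hmain : ∀ x : ℝ, (p n).eval x * q.eval x
      = g.eval x * ∏ z ∈ T, (x - z) ^ e z := by
    intro x
    rw [heval x, hqe x]
    have hsplit : ∏ z ∈ T, (x - z) ^ e z
        = (∏ z ∈ T, (x - z) ^ (p n).roots.count z)
          * ∏ z ∈ T, (x - z) ^ (if z ∈ RS then 1 else 0) := by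
      rw [← Finset.prod_mul_distrib]
      exact Finset.prod_congr rfl fun z _ => pow_add _ _ _
    rw [hsplit]; ring
  have hparity : ∀ z : ℝ, (a < (z:EReal) ∧ (z:EReal) < b) → z ∈ T → Even (e z) := by
    intro z hzab hz
    simp only [he]
    by_cases hodd : Odd ((p n).roots.count z)
    · have hmem : z ∈ RS := by rw [hRS, Finset.mem_filter]; exact ⟨hz, hzab, hodd⟩
      rw [if_pos hmem]
      exact hodd.add_one
    · have hmem : z ∉ RS := by
        rw [hRS, Finset.mem_filter]; rintro ⟨_, _, hh⟩; exact hodd hh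
      rw [if_neg hmem, add_zero]
      exact Nat.not_odd_iff_even.mp hodd
  have hpair : ∀ x ∈ S, ∀ y ∈ S,
      0 ≤ ((p n).eval x * q.eval x) * ((p n).eval y * q.eval y) := by
    intro x hx y hy
    obtain ⟨hx1, hx2⟩ := hmemS x hx
    obtain ⟨hy1, hy2⟩ := hmemS y hy
    rw [hmain x, hmain y]
    have hrw : (g.eval x * ∏ z ∈ T, (x - z) ^ e z) * (g.eval y * ∏ z ∈ T, (y - z) ^ e z)
        = (g.eval x * g.eval y) * ∏ z ∈ T, ((x - z) * (y - z)) ^ e z := by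
      rw [mul_mul_mul_comm, ← Finset.prod_mul_distrib]
      congr 1
      exact Finset.prod_congr rfl fun z _ => (mul_pow _ _ _).symm
    rw [hrw]
    apply mul_nonneg (mul_pos (hgpos x) (hgpos y)).le
    apply Finset.prod_nonneg
    intro z hz
    by_cases hev : Even (e z)
    · exact hev.pow_nonneg _
    · have hzab : ¬ (a < (z:EReal) ∧ (z:EReal) < b) := fun hh => hev (hparity z hh hz)
      have hpos : 0 < (x - z) * (y - z) := by
        rcases not_and_or.mp hzab with hcase | hcase
        · have hza : (z : EReal) ≤ a := le_of_not_gt hcase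
          have hzx : z < x := by exact_mod_cast lt_of_le_of_lt hza hx1
          have hzy : z < y := by exact_mod_cast lt_of_le_of_lt hza hy1
          exact mul_pos (sub_pos.mpr hzx) (sub_pos.mpr hzy)
        · have hbz : b ≤ (z : EReal) := le_of_not_gt hcase
          have hxz : x < z := by exact_mod_cast lt_of_lt_of_le hx2 hbz
          have hyz : y < z := by exact_mod_cast lt_of_lt_of_le hy2 hbz
          exact mul_pos_of_neg_of_neg (sub_neg.mpr hxz) (sub_neg.mpr hyz)
      exact (pow_pos hpos _).le
  have hsign : ∃ s : ℝ, (s = 1 ∨ s = -1) ∧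
      ∀ x ∈ S, 0 ≤ s * ((p n).eval x * q.eval x) := by
    by_cases hall : ∀ x ∈ S, 0 ≤ (p n).eval x * q.eval x
    · exact ⟨1, Or.inl rfl, fun x hx => by simpa using hall x hx⟩
    · push_neg at hall
      obtain ⟨x₀, hx₀, hneg⟩ := hall
      refine ⟨-1, Or.inr rfl, fun y hy => ?_⟩
      nlinarith [hpair x₀ hx₀ y hy]
  have hcard_le : RS.card ≤ n := by
    calc RS.card ≤ T.card := by rw [hRS]; exact Finset.card_filter_le _ _
      _ ≤ Multiset.card (p n).roots := by rw [hT]; exact Multiset.toFinset_card_le _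
      _ ≤ (p n).natDegree := (p n).card_roots'
      _ = n := hdeg n le_rfl
  have hcard : RS.card = n := by
    by_contra hnee
    have hlt : RS.card < n := lt_of_le_of_ne hcard_le hnee
    obtain ⟨s, hs1, hs2⟩ := hsign
    have hqn : q.natDegree < n := by rw [hqdeg]; exact hlt
    obtain ⟨hQint, hQ0⟩ := key q.natDegree hqn q le_rfl
    have hfint : Integrable (fun x => s * (w x * (p n).eval x * q.eval x))
        (volume.restrict S) := hQint.const_mul s
    have hfnn : 0 ≤ᵐ[volume.restrict S]
        (fun x => s * (w x * (p n).eval x * q.eval x)) := by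
      filter_upwards [ae_restrict_mem hSm] with x hx
      obtain ⟨hx1, hx2⟩ := hmemS x hx
      have h0 : 0 ≤ w x := hw x hx1 hx2
      have h2 := hs2 x hx
      have hre : s * (w x * (p n).eval x * q.eval x)
          = w x * (s * ((p n).eval x * q.eval x)) := by ring
      rw [hre]
      exact mul_nonneg h0 h2
    have hfI : (∫ x in S, s * (w x * (p n).eval x * q.eval x)) = 0 := by
      rw [integral_const_mul, hQ0, mul_zero]
    have hae0 := (integral_eq_zero_iff_of_nonneg_ae hfnn hfint).mp hfI
    have hZfin : {t : ℝ | (p n).eval t * q.eval t = 0}.Finite := by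
      apply Set.Finite.subset (finite_setOf_isRoot (mul_ne_zero hpn0 hq0))
      intro t ht
      simp only [Set.mem_setOf_eq, IsRoot, eval_mul]
      exact ht
    have hZ0 : ∀ᵐ x ∂(volume.restrict S), (p n).eval x * q.eval x ≠ 0 := by
      apply ae_restrict_of_ae
      have hm := hZfin.measure_zero (volume : Measure ℝ)
      rw [ae_iff]
      simp only [ne_eq, not_not]
      exact hm
    have hw0 : (fun x => w x * (p n).eval x * (p n).eval x)
        =ᵐ[volume.restrict S] 0 := by
      filter_upwards [hae0, hZ0] with x h1 h2
      have hs0 : s ≠ 0 := by rcases hs1 with rfl | rfl <;> norm_num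
      have h3 : w x * (p n).eval x * q.eval x = 0 := by
        have h4 : s * (w x * (p n).eval x * q.eval x) = 0 := h1
        rcases mul_eq_zero.mp h4 with h | h
        · exact absurd h hs0
        · exact h
      have h5 : w x * ((p n).eval x * q.eval x) = 0 := by
        rw [← mul_assoc]; exact h3
      have hwx : w x = 0 := by
        rcases mul_eq_zero.mp h5 with h | h
        · exact h
        · exact absurd h h2
      simp [hwx]
    have hone : (1:ℝ) = 0 := by
      calc (1:ℝ) = ∫ x in S, w x * (p n).eval x * (p n).eval x := by
            rw [horth n le_rfl n le_rfl, if_pos rfl]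
        _ = 0 := by rw [integral_congr_ae hw0]; simp
    exact one_ne_zero hone
  -- conclude: the n elements of RS are the desired zeros
  have hTR : RS = T := by
    apply Finset.eq_of_subset_of_card_le (by rw [hRS]; exact Finset.filter_subset _ _)
    calc T.card ≤ Multiset.card (p n).roots := by rw [hT]; exact Multiset.toFinset_card_le _
      _ ≤ (p n).natDegree := (p n).card_roots'
      _ = n := hdeg n le_rfl
      _ = RS.card := hcard.symm
  have hmemroot : ∀ z ∈ RS, (p n).eval z = 0 := by
    intro z hz
    rw [hRS, Finset.mem_filter] at hz
    have hz1 : z ∈ (p n).roots := by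
      have := hz.1
      rw [hT] at this
      exact Multiset.mem_toFinset.mp this
    exact (mem_roots hpn0).mp hz1
  have hmemab : ∀ z ∈ RS, a < (z:EReal) ∧ (z:EReal) < b := by
    intro z hz
    rw [hRS, Finset.mem_filter] at hz
    exact hz.2.1
  refine ⟨fun k => (RS.equivFin.symm (Fin.cast hcard.symm k) : ℝ), ?_, ?_, ?_⟩
  · intro k1 k2 hk
    have h1 := RS.equivFin.symm.injective (Subtype.ext hk)
    exact Fin.ext (by simpa using congrArg Fin.val h1)
  · intro k
    have hz := (RS.equivFin.symm (Fin.cast hcard.symm k)).2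
    exact ⟨(hmemab _ hz).1, (hmemab _ hz).2, hmemroot _ hz⟩
  · intro t ht
    have htR : t ∈ RS := by
      rw [hTR, hT]
      exact Multiset.mem_toFinset.mpr ((mem_roots hpn0).mpr ht)
    refine ⟨Fin.cast hcard (RS.equivFin ⟨t, htR⟩), ?_⟩
    have hcc : Fin.cast hcard.symm (Fin.cast hcard (RS.equivFin ⟨t, htR⟩))
        = RS.equivFin ⟨t, htR⟩ := by ext; simp
    beta_reduce
    rw [hcc, Equiv.symm_apply_apply]
end

section
/- With S the diagonal matrix S_{k,k} = sqrt(Σ_{m=0}^{n-1} q_m(x_k)²), U the eigenvector matrix of the Jacobi matrix, and e the first standard basis vector, one has S_{k,k} = sqrt(w(x_k)) / ((U^T e)_k · sqrt(∫_a^b w(x) dx)) for k = 0,...,n-1. -/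
open MeasureTheory Matrix

/-- Expression for the diagonal scaling entries
`S_{k,k} = sqrt(Σ_m q_m(x_k)²)` in terms of `Uᵀ e`:
`S_{k,k} = sqrt(w(x_k)) / ((Uᵀ e)_k · sqrt(∫ w))`. -/
theorem scaling_matrix_via_first_row_of_eigenvector_matrix
    (a b : EReal) (hab : a < b) (n : ℕ) (hn : 0 < n)
    (w : ℝ → ℝ) (p : ℕ → Polynomial ℝ) (x : Fin n → ℝ)
    (hw : ∀ t : ℝ, a < (t : EReal) → (t : EReal) < b → 0 ≤ w t)
    (hInt : IntegrableOn w {t : ℝ | a < (t : EReal) ∧ (t : EReal) < b})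
    (hdeg : ∀ k ≤ n, (p k).natDegree = k)
    (hlead : ∀ k ≤ n, 0 < (p k).leadingCoeff)
    (horth : ∀ j ≤ n, ∀ k ≤ n,
      (∫ t in {t : ℝ | a < (t : EReal) ∧ (t : EReal) < b},
        w t * (p j).eval t * (p k).eval t) = if j = k then 1 else 0)
    (hx : ∀ k : Fin n, a < ((x k : ℝ) : EReal) ∧ ((x k : ℝ) : EReal) < b ∧
      (p n).eval (x k) = 0)
    (hxmono : StrictMono x)
    (q : ℕ → ℝ → ℝ)
    (hq : ∀ m t, q m t = Real.sqrt (w t) * (p m).eval t)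
    (U : Matrix (Fin n) (Fin n) ℝ)
    (hU : ∀ j k : Fin n,
      U j k = q j (x k) / Real.sqrt (∑ m : Fin n, (q m (x k)) ^ 2))
    (e : Fin n → ℝ)
    (he : ∀ k : Fin n, e k = if (k : ℕ) = 0 then 1 else 0) :
    ∀ k : Fin n,
      Real.sqrt (∑ m : Fin n, (q m (x k)) ^ 2)
        = Real.sqrt (w (x k)) /
          ((Uᵀ.mulVec e) k *
            Real.sqrt (∫ t in {t : ℝ | a < (t : EReal) ∧ (t : EReal) < b}, w t)) := by
  intro k
  have h0 : (p 0).natDegree = 0 := hdeg 0 (Nat.zero_le n)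
  set c := (p 0).coeff 0 with hc
  have hp0 : p 0 = Polynomial.C c := Polynomial.eq_C_of_natDegree_eq_zero h0
  have hcpos : 0 < c := by
    have := hlead 0 (Nat.zero_le n)
    rwa [Polynomial.leadingCoeff, h0] at this
  -- integral of w equals (c*c)⁻¹
  have h := horth 0 (Nat.zero_le n) 0 (Nat.zero_le n)
  simp only [hp0, Polynomial.eval_C, if_pos rfl] at h
  rw [show (fun t : ℝ => w t * c * c) = fun t : ℝ => (c * c) * w t from
      funext fun t => by ring] at h
  rw [MeasureTheory.integral_const_mul, if_pos trivial] at h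
  have hcc : (c * c) ≠ 0 := by positivity
  have hint : (∫ t in {t : ℝ | a < (t : EReal) ∧ (t : EReal) < b}, w t) = (c * c)⁻¹ := by
    field_simp at h ⊢
    linarith [h]
  have hsqint : Real.sqrt (∫ t in {t : ℝ | a < (t : EReal) ∧ (t : EReal) < b}, w t)
      = c⁻¹ := by
    rw [hint, Real.sqrt_inv, Real.sqrt_mul_self hcpos.le]
  -- the mulVec entry
  have hz : (Uᵀ.mulVec e) k = U ⟨0, hn⟩ k := by
    simp only [Matrix.mulVec, dotProduct, Matrix.transpose_apply, he]
    rw [Finset.sum_eq_single (⟨0, hn⟩ : Fin n)]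
    · simp
    · intro j _ hj
      have : (j : ℕ) ≠ 0 := fun hh => hj (Fin.ext hh)
      simp [this]
    · intro hmem; exact absurd (Finset.mem_univ _) hmem
  set s := Real.sqrt (w (x k)) with hs
  set T := ∑ m : Fin n, (q m (x k)) ^ 2 with hT
  have hq0 : q ((⟨0, hn⟩ : Fin n) : ℕ) (x k) = s * c := by
    rw [hq, hp0]; simp [hs]
  rw [hz, hU, hsqint, hq0, ← hT]
  by_cases hs0 : s = 0
  · have hq00 : ∀ m : Fin n, q (m : ℕ) (x k) = 0 := by
      intro m; rw [hq, ← hs, hs0, zero_mul]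
    have hT0 : T = 0 := by
      rw [hT]; apply Finset.sum_eq_zero; intro m _; rw [hq00]; ring
    simp [hT0, hs0]
  · have hspos : 0 < s := lt_of_le_of_ne (Real.sqrt_nonneg _) (Ne.symm hs0)
    have hTpos : 0 < T := by
      have hle : (s * c) ^ 2 ≤ T := by
        rw [hT]
        have := Finset.single_le_sum (f := fun m : Fin n => (q (m : ℕ) (x k)) ^ 2)
          (fun m _ => sq_nonneg _) (Finset.mem_univ (⟨0, hn⟩ : Fin n))
        simpa only [hq0] using this
      have : 0 < (s * c) ^ 2 := by positivity
      linarith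
    have hST : Real.sqrt T ≠ 0 := by
      have := Real.sqrt_pos.mpr hTpos; linarith
    field_simp
end

section
/- (Gauss–Jacobi quadrature) For orthonormal polynomials p_0,...,p_n on [a,b] for weight w, there exist positive real numbers w_0,...,w_{n-1} (Christoffel numbers) such that ∫_a^b w(x) p(x) dx = Σ_{k=0}^{n-1} w_k p(x_k) for every polynomial p of degree at most 2n-1, where x_0,...,x_{n-1} are the zeros of p_n. -/
open MeasureTheory

/-- Gauss–Jacobi quadrature: there are positive Christoffel numbers
`w_0, ..., w_{n-1}` such that `∫ w·p = Σ_k w_k p(x_k)` for every polynomial `p`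
of degree at most `2n-1`, where the `x_k` are the zeros of `p n`. -/
theorem gauss_jacobi_quadrature
    (a b : EReal) (hab : a < b) (n : ℕ) (hn : 0 < n)
    (w : ℝ → ℝ) (p : ℕ → Polynomial ℝ) (x : Fin n → ℝ)
    (hw : ∀ t : ℝ, a < (t : EReal) → (t : EReal) < b → 0 ≤ w t)
    (hInt : ∀ r : Polynomial ℝ,
      IntegrableOn (fun t => w t * r.eval t)
        {t : ℝ | a < (t : EReal) ∧ (t : EReal) < b})
    (hdeg : ∀ k ≤ n, (p k).natDegree = k)
    (hlead : ∀ k ≤ n, 0 < (p k).leadingCoeff)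
    (horth : ∀ j ≤ n, ∀ k ≤ n,
      (∫ t in {t : ℝ | a < (t : EReal) ∧ (t : EReal) < b},
        w t * (p j).eval t * (p k).eval t) = if j = k then 1 else 0)
    (hx : ∀ k : Fin n, a < ((x k : ℝ) : EReal) ∧ ((x k : ℝ) : EReal) < b ∧
      (p n).eval (x k) = 0)
    (hxmono : StrictMono x) :
    ∃ wt : Fin n → ℝ, (∀ k, 0 < wt k) ∧
      ∀ r : Polynomial ℝ, r.natDegree ≤ 2 * n - 1 →
        (∫ t in {t : ℝ | a < (t : EReal) ∧ (t : EReal) < b}, w t * r.eval t)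
          = ∑ k : Fin n, wt k * r.eval (x k) := by
  set S : Set ℝ := {t : ℝ | a < (t : EReal) ∧ (t : EReal) < b} with hSdef
  have hSmeas : MeasurableSet S := by
    have : S = (fun t : ℝ => (t : EReal)) ⁻¹' (Set.Ioo a b) := rfl
    rw [this]
    exact measurable_coe_real_ereal measurableSet_Ioo
  set I : Polynomial ℝ → ℝ := fun r => ∫ t in S, w t * r.eval t with hI
  have hIadd : ∀ r₁ r₂ : Polynomial ℝ, I (r₁ + r₂) = I r₁ + I r₂ := by
    intro r₁ r₂
    have h : (fun t => w t * (r₁ + r₂).eval t)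
        = fun t => w t * r₁.eval t + w t * r₂.eval t := by
      funext t; simp [mul_add]
    simp only [hI]
    rw [h, integral_add (hInt r₁) (hInt r₂)]
  have hIsmul : ∀ (c : ℝ) (r : Polynomial ℝ), I (Polynomial.C c * r) = c * I r := by
    intro c r
    have h : (fun t => w t * (Polynomial.C c * r).eval t)
        = fun t => c * (w t * r.eval t) := by
      funext t; simp; ring
    simp only [hI]
    rw [h, integral_const_mul]
  have hIsum : ∀ f : Fin n → Polynomial ℝ, I (∑ i, f i) = ∑ i, I (f i) := by
    intro f
    have h : (fun t => w t * (∑ i, f i).eval t)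
        = fun t => ∑ i, w t * (f i).eval t := by
      funext t; rw [Polynomial.eval_finset_sum, Finset.mul_sum]
    simp only [hI]
    rw [h, integral_finset_sum _ fun i _ => hInt (f i)]
  have hIzero : I 0 = 0 := by simp only [hI]; simp
  -- I (p n * p j) = 0 for j < n
  have horth' : ∀ j : ℕ, j < n → I (p n * p j) = 0 := by
    intro j hj
    have h : (fun t => w t * (p n * p j).eval t)
        = fun t => w t * (p j).eval t * (p n).eval t := by
      funext t; simp; ring
    simp only [hI]
    rw [h, horth j hj.le n le_rfl, if_neg hj.ne]
  -- orthogonality of p n against low degree polynomials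
  have key : ∀ k : ℕ, k ≤ n → ∀ q : Polynomial ℝ,
      q.degree < (k : WithBot ℕ) → I (p n * q) = 0 := by
    intro k
    induction k with
    | zero =>
      intro _ q hq
      rw [Nat.cast_zero] at hq
      rw [Polynomial.degree_eq_bot.mp (Nat.WithBot.lt_zero_iff.mp hq), mul_zero, hIzero]
    | succ k ih =>
      intro hkn q hq
      by_cases hq0 : q = 0
      · rw [hq0, mul_zero, hIzero]
      · set j := q.natDegree with hj
        have hdq : q.degree = (j : WithBot ℕ) := Polynomial.degree_eq_natDegree hq0
        have hjk : j ≤ k := by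
          rw [hdq] at hq
          exact_mod_cast Nat.lt_succ_iff.mp (by exact_mod_cast hq)
        have hjn : j < n := lt_of_le_of_lt hjk (lt_of_lt_of_le (Nat.lt_succ_self k) hkn)
        have hpj0 : (p j).leadingCoeff ≠ 0 := (hlead j hjn.le).ne'
        have hpjne : p j ≠ 0 := fun h => hpj0 (by simp [h])
        set c := q.leadingCoeff / (p j).leadingCoeff with hc
        have hc0 : c ≠ 0 := div_ne_zero (Polynomial.leadingCoeff_ne_zero.mpr hq0) hpj0
        set q' := q - Polynomial.C c * p j with hq'
        have hdpj : (p j).degree = (j : WithBot ℕ) := by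
          rw [Polynomial.degree_eq_natDegree hpjne, hdeg j hjn.le]
        have hdCc : q.degree = (Polynomial.C c * p j).degree := by
          rw [Polynomial.degree_C_mul hc0, hdpj, hdq]
        have hlc : q.leadingCoeff = (Polynomial.C c * p j).leadingCoeff := by
          rw [Polynomial.leadingCoeff_mul, Polynomial.leadingCoeff_C, hc,
            div_mul_cancel₀ _ hpj0]
        have hdq' : q'.degree < (k : WithBot ℕ) := by
          have := Polynomial.degree_sub_lt hdCc hq0 hlc
          rw [hdq] at this
          exact lt_of_lt_of_le this (by exact_mod_cast hjk)
        have hIq' : I (p n * q') = 0 := ih (le_of_lt (Nat.lt_of_succ_le hkn)) q' hdq'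
        have hsplit : p n * q = p n * q' + Polynomial.C c * (p n * p j) := by
          rw [hq']; ring
        rw [hsplit, hIadd, hIq', hIsmul, horth' j hjn, mul_zero, add_zero]
  -- the monic multiple of p n
  have hpn0 : (p n).leadingCoeff ≠ 0 := (hlead n le_rfl).ne'
  have hpnne : p n ≠ 0 := fun h => hpn0 (by simp [h])
  set m : Polynomial ℝ := p n * Polynomial.C ((p n).leadingCoeff)⁻¹ with hm
  have hmmonic : m.Monic := Polynomial.monic_mul_leadingCoeff_inv hpnne
  have hmdeg : m.degree = (n : WithBot ℕ) := by
    rw [hm, Polynomial.degree_mul_leadingCoeff_inv _ hpnne,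
      Polynomial.degree_eq_natDegree hpnne, hdeg n le_rfl]
  have hmnat : m.natDegree = n := Polynomial.natDegree_eq_of_degree_eq_some hmdeg
  have hmroot : ∀ k : Fin n, m.eval (x k) = 0 := by
    intro k
    rw [hm, Polynomial.eval_mul, (hx k).2.2, zero_mul]
  -- Lagrange basis and the weights
  have hinj : Set.InjOn x (Finset.univ : Finset (Fin n)) := Set.injOn_of_injective hxmono.injective
  have hcard : (Finset.univ : Finset (Fin n)).card = n := by simp
  set g : Fin n → Polynomial ℝ := fun k => Lagrange.basis Finset.univ x k with hg
  set wt : Fin n → ℝ := fun k => I (g k) with hwt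
  -- the quadrature identity
  have hquad : ∀ r : Polynomial ℝ, r.natDegree ≤ 2 * n - 1 →
      I r = ∑ k : Fin n, wt k * r.eval (x k) := by
    intro r hr
    set q := r /ₘ m with hq
    set s := r %ₘ m with hs
    have hrdecomp : r = s + m * q := (Polynomial.modByMonic_add_div r m).symm
    have hqdeg : q.degree < (n : WithBot ℕ) := by
      rcases eq_or_ne q 0 with h0 | h0
      · rw [h0, Polynomial.degree_zero]; exact_mod_cast WithBot.bot_lt_coe n
      · have : q.natDegree < n := by
          rw [hq, Polynomial.natDegree_divByMonic r hmmonic, hmnat]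
          omega
        rw [Polynomial.degree_eq_natDegree h0]
        exact_mod_cast this
    have hmq : I (m * q) = 0 := by
      have : m * q = p n * (Polynomial.C ((p n).leadingCoeff)⁻¹ * q) := by rw [hm]; ring
      rw [this]
      refine key n le_rfl _ ?_
      rw [Polynomial.degree_C_mul (inv_ne_zero hpn0)]
      exact hqdeg
    have hsdeg : s.degree < ((Finset.univ : Finset (Fin n)).card : WithBot ℕ) := by
      rw [hcard]
      exact lt_of_lt_of_le (Polynomial.degree_modByMonic_lt r hmmonic) (le_of_eq hmdeg)
    have hsval : ∀ k : Fin n, s.eval (x k) = r.eval (x k) := by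
      intro k
      conv_rhs => rw [hrdecomp]
      rw [Polynomial.eval_add, Polynomial.eval_mul, hmroot k, zero_mul, add_zero]
    have hinterp : s = ∑ i : Fin n, Polynomial.C (s.eval (x i)) * g i := by
      conv_lhs => rw [Lagrange.eq_interpolate hinj hsdeg]
      rw [Lagrange.interpolate_apply]
    have hIr : I r = I s := by
      rw [hrdecomp, hIadd, hmq, add_zero]
    rw [hIr, hinterp, hIsum]
    refine Finset.sum_congr rfl fun k _ => ?_
    rw [hIsmul, hsval, mul_comm]
  refine ⟨wt, ?_, hquad⟩
  -- positivity of the weights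
  intro k
  have hgk0 : g k ≠ 0 := Lagrange.basis_ne_zero hinj (Finset.mem_univ k)
  have hgdeg : (g k).natDegree = n - 1 := by
    rw [hg, Lagrange.natDegree_basis hinj (Finset.mem_univ k), hcard]
  have hg2deg : (g k * g k).natDegree ≤ 2 * n - 1 := by
    refine le_trans (Polynomial.natDegree_mul_le) ?_
    rw [hgdeg]; omega
  have hIgk : I (g k * g k) = wt k := by
    rw [hquad _ hg2deg]
    rw [Finset.sum_eq_single k]
    · rw [Polynomial.eval_mul, hg,
        Lagrange.eval_basis_self hinj (Finset.mem_univ k), mul_one, mul_one]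
    · intro j _ hjk
      rw [Polynomial.eval_mul, hg,
        Lagrange.eval_basis_of_ne hjk.symm (Finset.mem_univ j), zero_mul, mul_zero]
    · intro h; exact absurd (Finset.mem_univ k) h
  -- the integrand is a.e. nonnegative
  have hmemae : ∀ᵐ t ∂(volume.restrict S), t ∈ S := ae_restrict_mem hSmeas
  have hnonneg : 0 ≤ᵐ[volume.restrict S] fun t => w t * (g k * g k).eval t := by
    filter_upwards [hmemae] with t ht
    have : (0:ℝ) ≤ w t := hw t ht.1 ht.2
    rw [Polynomial.eval_mul]
    exact mul_nonneg this (mul_self_nonneg _)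
  have hIge : 0 ≤ I (g k * g k) := integral_nonneg_of_ae hnonneg
  rcases lt_or_eq_of_le hIge with h | h
  · rwa [hIgk] at h
  -- the degenerate case can't happen since ∫ w p₀² = 1
  · exfalso
    have hzero : (fun t => w t * (g k * g k).eval t) =ᵐ[volume.restrict S] 0 := by
      have := (integral_eq_zero_iff_of_nonneg_ae hnonneg (hInt (g k * g k))).mp h.symm
      exact this
    have hgfin : Set.Finite {t : ℝ | (g k).IsRoot t} :=
      Polynomial.finite_setOf_isRoot hgk0
    have hgaene : ∀ᵐ t ∂(volume.restrict S), (g k).eval t ≠ 0 := by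
      refine ae_restrict_of_ae (Filter.eventually_iff.mpr (mem_ae_iff.mpr ?_))
      have : {t : ℝ | (g k).eval t ≠ 0}ᶜ = {t : ℝ | (g k).IsRoot t} := by
        ext t; simp [Polynomial.IsRoot]
      rw [this]
      exact hgfin.measure_zero _
    have hwzero : (fun t => w t) =ᵐ[volume.restrict S] 0 := by
      filter_upwards [hzero, hgaene] with t ht hgt
      simp only [Pi.zero_apply] at ht ⊢
      rw [Polynomial.eval_mul] at ht
      rcases mul_eq_zero.mp ht with h1 | h2
      · exact h1
      · exact absurd (mul_self_eq_zero.mp h2) hgt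
    have h1 : (∫ t in S, w t * (p 0).eval t * (p 0).eval t) = 1 := by
      have := horth 0 (Nat.zero_le n) 0 (Nat.zero_le n)
      simpa using this
    have h0 : (∫ t in S, w t * (p 0).eval t * (p 0).eval t) = 0 := by
      have : (fun t => w t * (p 0).eval t * (p 0).eval t) =ᵐ[volume.restrict S] 0 := by
        filter_upwards [hwzero] with t ht
        simp only [Pi.zero_apply] at ht ⊢
        rw [ht, zero_mul, zero_mul]
      rw [integral_congr_ae this]; simp
    rw [h1] at h0
    exact one_ne_zero h0
end

section
/- There exist points a = y_0 < y_1 < ... < y_{n-1} < y_n = b such that each Christoffel number equals the integral of the weight over the corresponding subinterval: w_k = ∫_{y_k}^{y_{k+1}} w(x) dx for k = 0,...,n-1. -/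
open MeasureTheory Set Filter Topology

/-- Each Christoffel number is the integral of the weight over a subinterval:
there exist `a = y_0 < y_1 < ... < y_n = b` with
`w_k = ∫_{y_k}^{y_{k+1}} w(x) dx`. -/
theorem christoffel_numbers_as_integrals_over_subintervals
    (a b : EReal) (hab : a < b) (n : ℕ) (hn : 0 < n)
    (w : ℝ → ℝ) (p : ℕ → Polynomial ℝ) (x : Fin n → ℝ) (wt : Fin n → ℝ)
    (hw : ∀ t : ℝ, a < (t : EReal) → (t : EReal) < b → 0 ≤ w t)
    (hInt : ∀ r : Polynomial ℝ,
      IntegrableOn (fun t => w t * r.eval t)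
        {t : ℝ | a < (t : EReal) ∧ (t : EReal) < b})
    (hdeg : ∀ k ≤ n, (p k).natDegree = k)
    (hlead : ∀ k ≤ n, 0 < (p k).leadingCoeff)
    (horth : ∀ j ≤ n, ∀ k ≤ n,
      (∫ t in {t : ℝ | a < (t : EReal) ∧ (t : EReal) < b},
        w t * (p j).eval t * (p k).eval t) = if j = k then 1 else 0)
    (hx : ∀ k : Fin n, a < ((x k : ℝ) : EReal) ∧ ((x k : ℝ) : EReal) < b ∧
      (p n).eval (x k) = 0)
    (hxmono : StrictMono x)
    (hwtpos : ∀ k, 0 < wt k)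
    (hquad : ∀ r : Polynomial ℝ, r.natDegree ≤ 2 * n - 1 →
      (∫ t in {t : ℝ | a < (t : EReal) ∧ (t : EReal) < b}, w t * r.eval t)
        = ∑ k : Fin n, wt k * r.eval (x k)) :
    ∃ y : Fin (n + 1) → EReal, y 0 = a ∧ y (Fin.last n) = b ∧ StrictMono y ∧
      ∀ k : Fin n,
        wt k = ∫ t in {t : ℝ | y k.castSucc < (t : EReal) ∧ (t : EReal) < y k.succ}, w t := by
  classical
  set S : Set ℝ := {t : ℝ | a < (t : EReal) ∧ (t : EReal) < b} with hSdef
  have hSopen : IsOpen S := by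
    have : S = ((↑) : ℝ → EReal) ⁻¹' (Set.Ioo a b) := rfl
    rw [this]
    exact isOpen_Ioo.preimage continuous_coe_real_ereal
  have hSm : MeasurableSet S := hSopen.measurableSet
  have hwInt : IntegrableOn w S := by simpa using hInt 1
  have hwS : ∀ t ∈ S, 0 ≤ w t := fun t ht => hw t ht.1 ht.2
  set T : ℝ := ∫ t in S, w t with hTdef
  have hT : T = ∑ k : Fin n, wt k := by
    have h1 := hquad 1 (by simp)
    simpa using h1
  set F : ℝ → ℝ := fun s => ∫ t in S ∩ Iio s, w t with hFdef
  have hIntSub : ∀ A : Set ℝ, IntegrableOn w (S ∩ A) := fun A =>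
    hwInt.mono_set inter_subset_left
  -- ae equality helpers
  have hIcoIoo : ∀ u v : ℝ, (∫ t in S ∩ Ico u v, w t) = ∫ t in S ∩ Ioo u v, w t :=
    fun u v => setIntegral_congr_set ((ae_eq_refl _).inter (Ioo_ae_eq_Ico (a := u) (b := v)).symm)
  have hIcoIoc : ∀ u v : ℝ, (∫ t in S ∩ Ico u v, w t) = ∫ t in S ∩ Ioc u v, w t :=
    fun u v => setIntegral_congr_set ((ae_eq_refl _).inter
      ((Ioo_ae_eq_Ico (a := u) (b := v)).symm.trans (Ioo_ae_eq_Ioc)))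
  -- splitting lemmas
  have hsplit : ∀ u v : ℝ, u ≤ v → F v = F u + ∫ t in S ∩ Ico u v, w t := by
    intro u v huv
    have hun : S ∩ Iio v = (S ∩ Iio u) ∪ (S ∩ Ico u v) := by
      rw [← inter_union_distrib_left, Iio_union_Ico_eq_Iio huv]
    have hdisj : Disjoint (S ∩ Iio u) (S ∩ Ico u v) := by
      refine Disjoint.mono inter_subset_right inter_subset_right ?_
      exact disjoint_left.2 fun t ht1 ht2 => absurd ht1 (not_lt.2 ht2.1)
    show (∫ t in S ∩ Iio v, w t) = _
    rw [hun, setIntegral_union hdisj (hSm.inter measurableSet_Ico) (hIntSub _) (hIntSub _)]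
  have hsplitT : ∀ u : ℝ, T = F u + ∫ t in S ∩ Ioi u, w t := by
    intro u
    have hun : S = (S ∩ Iio u) ∪ (S ∩ Ici u) := by
      rw [← inter_union_distrib_left, Iio_union_Ici, inter_univ]
    have hdisj : Disjoint (S ∩ Iio u) (S ∩ Ici u) := by
      refine Disjoint.mono inter_subset_right inter_subset_right ?_
      exact disjoint_left.2 fun t ht1 ht2 => absurd ht1 (not_lt.2 (mem_Ici.1 ht2) : ¬ t < u)
    have h2 : (∫ t in S ∩ Ici u, w t) = ∫ t in S ∩ Ioi u, w t :=
      setIntegral_congr_set ((ae_eq_refl _).inter (Ioi_ae_eq_Ici (a := u)).symm)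
    rw [hTdef, ← h2]
    conv_lhs => rw [hun]
    rw [setIntegral_union hdisj (hSm.inter measurableSet_Ici) (hIntSub _) (hIntSub _)]
  have hFmono : Monotone F := by
    intro u v huv
    rw [hsplit u v huv]
    have h0 : 0 ≤ ∫ t in S ∩ Ico u v, w t :=
      setIntegral_nonneg (hSm.inter measurableSet_Ico) fun t ht => hwS t ht.1
    linarith
  -- F is a primitive of the indicator of w
  have hg : Integrable (S.indicator w) volume := hwInt.integrable_indicator hSm
  have hind : ∀ u v : ℝ, (∫ t in Ioc u v, S.indicator w t) = ∫ t in S ∩ Ioc u v, w t := by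
    intro u v
    rw [setIntegral_indicator hSm, inter_comm]
  have hFprim : ∀ s : ℝ, F s = F 0 + ∫ t in (0:ℝ)..s, S.indicator w t := by
    intro s
    rcases le_total 0 s with h | h
    · rw [intervalIntegral.integral_of_le h, hind, ← hIcoIoc, ← hsplit 0 s h]
    · rw [intervalIntegral.integral_symm, intervalIntegral.integral_of_le h, hind, ← hIcoIoc]
      have := hsplit s 0 h
      linarith
  have hFcont : Continuous F :=
    (continuous_const.add (hg.continuous_primitive 0)).congr fun s => (hFprim s).symm
  -- limits of F
  have hTop : Tendsto (fun m : ℕ => F (m : ℝ)) atTop (𝓝 T) := by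
    have hU : (⋃ m : ℕ, S ∩ Iio (m : ℝ)) = S := by
      ext t
      simp only [mem_iUnion, mem_inter_iff, mem_Iio]
      constructor
      · rintro ⟨m, hm, _⟩; exact hm
      · intro ht
        obtain ⟨m, hm⟩ := exists_nat_gt t
        exact ⟨m, ht, hm⟩
    have h := tendsto_setIntegral_of_monotone (f := w) (μ := volume)
      (s := fun m : ℕ => S ∩ Iio (m : ℝ))
      (fun m => hSm.inter measurableSet_Iio)
      (fun i j hij => inter_subset_inter_right _ (Iio_subset_Iio (by exact_mod_cast hij)))
      (by rw [hU]; exact hwInt)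
    rwa [hU] at h
  have hBot : Tendsto (fun m : ℕ => F (-(m : ℝ))) atTop (𝓝 0) := by
    have hI : (⋂ m : ℕ, S ∩ Iio (-(m : ℝ))) = ∅ := by
      ext t
      simp only [mem_iInter, mem_inter_iff, mem_Iio, mem_empty_iff_false, iff_false, not_forall]
      obtain ⟨m, hm⟩ := exists_nat_gt (-t)
      exact ⟨m, fun h => absurd h.2 (by push_neg; linarith)⟩
    have h := tendsto_setIntegral_of_antitone (f := w) (μ := volume)
      (s := fun m : ℕ => S ∩ Iio (-(m : ℝ)))
      (fun m => hSm.inter measurableSet_Iio)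
      (fun i j hij => inter_subset_inter_right _ (Iio_subset_Iio (by
        have : (i : ℝ) ≤ (j : ℝ) := by exact_mod_cast hij
        linarith)))
      ⟨0, hIntSub _⟩
    rw [hI] at h
    simpa using h
  -- the cumulative sums of the Christoffel numbers
  set c : ℕ → ℝ := fun m => ∑ j : Fin n, if (j : ℕ) < m then wt j else 0 with hcdef
  have hc0 : c 0 = 0 := by simp [hcdef]
  have hcn : c n = T := by
    rw [hT]
    exact Finset.sum_congr rfl fun j _ => by simp [j.isLt]
  have hcsucc : ∀ m, ∀ hm : m < n, c (m + 1) = c m + wt ⟨m, hm⟩ := by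
    intro m hm
    have hterm : ∀ j : Fin n,
        (if (j : ℕ) < m + 1 then wt j else 0)
          = (if (j : ℕ) < m then wt j else 0) + (if j = ⟨m, hm⟩ then wt j else 0) := by
      intro j
      rcases lt_trichotomy (j : ℕ) m with h | h | h
      · have h1 : (j : ℕ) < m + 1 := Nat.lt_succ_of_lt h
        have h2 : j ≠ (⟨m, hm⟩ : Fin n) := by
          intro hc; apply absurd h; rw [hc]; simp
        simp [h, h1, h2]
      · have h1 : (j : ℕ) < m + 1 := by omega
        have h2 : j = (⟨m, hm⟩ : Fin n) := by exact Fin.ext h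
        simp [h, h1, h2]
      · have h1 : ¬ (j : ℕ) < m + 1 := by omega
        have h2 : ¬ (j : ℕ) < m := by omega
        have h3 : j ≠ (⟨m, hm⟩ : Fin n) := by
          intro hc; apply absurd h; rw [hc]; simp
        simp [h1, h2, h3]
    rw [hcdef]
    simp only [hterm, Finset.sum_add_distrib]
    congr 1
    rw [Finset.sum_ite_eq' Finset.univ (⟨m, hm⟩ : Fin n) wt]
    simp
  have hcmono : Monotone c := by
    intro m m' h
    refine Finset.sum_le_sum fun j _ => ?_
    by_cases hj : (j : ℕ) < m
    · simp [hj, lt_of_lt_of_le hj h]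
    · by_cases hj' : (j : ℕ) < m'
      · simp [hj, hj', (hwtpos j).le]
      · simp [hj, hj']
  have hcposT : ∀ m, 0 < m → m < n → 0 < c m ∧ c m < T := by
    intro m h0 hmn
    have h1 : c 1 = wt ⟨0, hn⟩ := by
      have := hcsucc 0 hn
      rw [hc0] at this
      simpa using this
    constructor
    · have h2 : c 1 ≤ c m := hcmono h0
      have := hwtpos ⟨0, hn⟩
      linarith [h1 ▸ h2]
    · have h2 : c m < c (m + 1) := by
        rw [hcsucc m hmn]
        linarith [hwtpos ⟨m, hmn⟩]
      have h3 : c (m + 1) ≤ c n := hcmono hmn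
      linarith [hcn ▸ h3]
  -- choose interior points via the intermediate value theorem
  have hex : ∀ k : Fin (n + 1), ∃ s : ℝ, 0 < (k : ℕ) → (k : ℕ) < n → F s = c k := by
    intro k
    by_cases hk : 0 < (k : ℕ) ∧ (k : ℕ) < n
    · obtain ⟨hcpos, hcltT⟩ := hcposT k hk.1 hk.2
      obtain ⟨m1, hm1⟩ := (hBot.eventually_lt_const hcpos).exists
      obtain ⟨m2, hm2⟩ := (hTop.eventually_const_lt hcltT).exists
      obtain ⟨s, hs⟩ := intermediate_value_univ (-(m1 : ℝ)) (m2 : ℝ) hFcont ⟨hm1.le, hm2.le⟩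
      exact ⟨s, fun _ _ => hs⟩
    · exact ⟨0, fun h1 h2 => absurd ⟨h1, h2⟩ hk⟩
  choose z hz using hex
  -- interior points lie strictly inside (a, b)
  have hzin : ∀ k : Fin (n + 1), 0 < (k : ℕ) → (k : ℕ) < n →
      a < ((z k : ℝ) : EReal) ∧ ((z k : ℝ) : EReal) < b := by
    intro k h0 hkn
    obtain ⟨hcpos, hcltT⟩ := hcposT k h0 hkn
    have hFz : F (z k) = c k := hz k h0 hkn
    constructor
    · by_contra hcon
      push_neg at hcon
      have hemp : S ∩ Iio (z k) = ∅ := by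
        ext t
        simp only [mem_inter_iff, mem_Iio, mem_empty_iff_false, iff_false, not_and]
        rintro ⟨hta, _⟩ htz
        exact absurd hta (not_lt.2 ((EReal.coe_lt_coe_iff.2 htz).le.trans hcon))
      have : F (z k) = 0 := by
        show (∫ t in S ∩ Iio (z k), w t) = 0
        rw [hemp]; simp
      rw [hFz] at this
      linarith
    · by_contra hcon
      push_neg at hcon
      have hall : S ∩ Iio (z k) = S := by
        refine inter_eq_left.2 fun t ht => ?_
        have : (t : EReal) < ((z k : ℝ) : EReal) := lt_of_lt_of_le ht.2 hcon
        exact EReal.coe_lt_coe_iff.1 this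
      have : F (z k) = T := by
        show (∫ t in S ∩ Iio (z k), w t) = T
        rw [hall]
      rw [hFz] at this
      linarith
  -- ordering of interior points
  have hzord : ∀ j k : Fin (n + 1), 0 < (j : ℕ) → (k : ℕ) < n → (j : ℕ) < (k : ℕ) →
      z j < z k := by
    intro j k hj hk hjk
    have hFj : F (z j) = c j := hz j hj (lt_trans hjk hk)
    have hFk : F (z k) = c k := hz k (lt_trans hj hjk) hk
    have hcc : c j < c k := by
      have h1 : c j < c ((j : ℕ) + 1) := by
        rw [hcsucc j (lt_trans hjk hk)]
        linarith [hwtpos ⟨(j : ℕ), lt_trans hjk hk⟩]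
      have h2 : c ((j : ℕ) + 1) ≤ c k := hcmono hjk
      linarith
    by_contra hcon
    push_neg at hcon
    have := hFmono hcon
    rw [hFj, hFk] at this
    linarith
  -- define the subdivision points
  set y : Fin (n + 1) → EReal := fun k =>
    if (k : ℕ) = 0 then a else if (k : ℕ) = n then b else ((z k : ℝ) : EReal) with hydef
  have hy0 : y 0 = a := by simp [hydef]
  have hylast : y (Fin.last n) = b := by simp [hydef, Fin.last, hn.ne']
  -- value computations for adjacent points
  have hyc : ∀ k : Fin n, y k.castSucc = if (k : ℕ) = 0 then a else ((z k.castSucc : ℝ) : EReal) := by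
    intro k
    have hne : (k : ℕ) ≠ n := Nat.ne_of_lt k.isLt
    simp only [hydef, Fin.coe_castSucc]
    rw [if_neg hne]
  have hys : ∀ k : Fin n, y k.succ = if (k : ℕ) + 1 = n then b else ((z k.succ : ℝ) : EReal) := by
    intro k
    simp only [hydef, Fin.val_succ]
    rw [if_neg (Nat.succ_ne_zero _)]
  have hwtk : ∀ k : Fin n, wt k = c ((k : ℕ) + 1) - c (k : ℕ) := by
    intro k
    rw [hcsucc (k : ℕ) k.isLt]
    simp
  refine ⟨y, hy0, hylast, ?_, ?_⟩
  · rw [Fin.strictMono_iff_lt_succ]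
    intro k
    rw [hyc k, hys k]
    by_cases h0 : (k : ℕ) = 0 <;> by_cases h1 : (k : ℕ) + 1 = n
    · rw [if_pos h0, if_pos h1]; exact hab
    · rw [if_pos h0, if_neg h1]
      exact (hzin k.succ (by simp) (by
        simp only [Fin.val_succ]
        exact lt_of_le_of_ne k.isLt h1)).1
    · rw [if_neg h0, if_pos h1]
      exact (hzin k.castSucc (by simpa [Fin.coe_castSucc] using Nat.pos_of_ne_zero h0)
        (by simpa [Fin.coe_castSucc] using k.isLt)).2
    · rw [if_neg h0, if_neg h1]
      refine EReal.coe_lt_coe_iff.2 ?_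
      refine hzord k.castSucc k.succ ?_ ?_ ?_
      · simpa [Fin.coe_castSucc] using Nat.pos_of_ne_zero h0
      · simp only [Fin.val_succ]
        exact lt_of_le_of_ne k.isLt h1
      · simp
  · intro k
    rw [hyc k, hys k]
    by_cases h0 : (k : ℕ) = 0 <;> by_cases h1 : (k : ℕ) + 1 = n
    · -- n = 1 case : whole interval
      rw [if_pos h0, if_pos h1]
      have : {t : ℝ | a < (t : EReal) ∧ (t : EReal) < b} = S := rfl
      rw [this, ← hTdef, hwtk k, h1, h0, hcn, hc0]
      ring
    · -- left edge
      rw [if_pos h0, if_neg h1]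
      have hsuccpos : 0 < (k.succ : ℕ) := by simp
      have hsucclt : (k.succ : ℕ) < n := by
        simp only [Fin.val_succ]
        exact lt_of_le_of_ne k.isLt h1
      have hzb := (hzin k.succ hsuccpos hsucclt).2
      have hset : {t : ℝ | a < (t : EReal) ∧ (t : EReal) < ((z k.succ : ℝ) : EReal)}
          = S ∩ Iio (z k.succ) := by
        ext t
        simp only [mem_setOf_eq, mem_inter_iff, mem_Iio, hSdef]
        constructor
        · rintro ⟨hta, htz⟩
          exact ⟨⟨hta, lt_trans htz hzb⟩, EReal.coe_lt_coe_iff.1 htz⟩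
        · rintro ⟨⟨hta, _⟩, htz⟩
          exact ⟨hta, EReal.coe_lt_coe_iff.2 htz⟩
      rw [hset]
      have hFz : F (z k.succ) = c (k.succ : ℕ) := hz k.succ hsuccpos hsucclt
      have : (∫ t in S ∩ Iio (z k.succ), w t) = F (z k.succ) := rfl
      rw [this, hFz, hwtk k]
      simp [Fin.val_succ, h0, hc0]
    · -- right edge
      rw [if_neg h0, if_pos h1]
      have hcpos : 0 < (k.castSucc : ℕ) := by
        simpa [Fin.coe_castSucc] using Nat.pos_of_ne_zero h0
      have hclt : (k.castSucc : ℕ) < n := by simpa [Fin.coe_castSucc] using k.isLt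
      have hza := (hzin k.castSucc hcpos hclt).1
      have hset : {t : ℝ | ((z k.castSucc : ℝ) : EReal) < (t : EReal) ∧ (t : EReal) < b}
          = S ∩ Ioi (z k.castSucc) := by
        ext t
        simp only [mem_setOf_eq, mem_inter_iff, mem_Ioi, hSdef]
        constructor
        · rintro ⟨hzt, htb⟩
          exact ⟨⟨lt_trans hza hzt, htb⟩, EReal.coe_lt_coe_iff.1 hzt⟩
        · rintro ⟨⟨_, htb⟩, hzt⟩
          exact ⟨EReal.coe_lt_coe_iff.2 hzt, htb⟩
      rw [hset]
      have hFz : F (z k.castSucc) = c (k.castSucc : ℕ) := hz k.castSucc hcpos hclt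
      have hTs := hsplitT (z k.castSucc)
      rw [hFz] at hTs
      rw [hwtk k]
      have hkc : (k.castSucc : ℕ) = (k : ℕ) := rfl
      rw [hkc] at hTs
      rw [h1, hcn]
      linarith
    · -- interior
      rw [if_neg h0, if_neg h1]
      have hcpos : 0 < (k.castSucc : ℕ) := by
        simpa [Fin.coe_castSucc] using Nat.pos_of_ne_zero h0
      have hclt : (k.castSucc : ℕ) < n := by simpa [Fin.coe_castSucc] using k.isLt
      have hsuccpos : 0 < (k.succ : ℕ) := by simp
      have hsucclt : (k.succ : ℕ) < n := by
        simp only [Fin.val_succ]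
        exact lt_of_le_of_ne k.isLt h1
      have hza := (hzin k.castSucc hcpos hclt).1
      have hzb := (hzin k.succ hsuccpos hsucclt).2
      have hzz : z k.castSucc < z k.succ :=
        hzord k.castSucc k.succ hcpos hsucclt (by simp)
      have hset : {t : ℝ | ((z k.castSucc : ℝ) : EReal) < (t : EReal) ∧
          (t : EReal) < ((z k.succ : ℝ) : EReal)}
          = S ∩ Ioo (z k.castSucc) (z k.succ) := by
        ext t
        simp only [mem_setOf_eq, mem_inter_iff, mem_Ioo, hSdef]
        constructor
        · rintro ⟨hzt, htz⟩
          exact ⟨⟨lt_trans hza hzt, lt_trans htz hzb⟩,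
            EReal.coe_lt_coe_iff.1 hzt, EReal.coe_lt_coe_iff.1 htz⟩
        · rintro ⟨_, hzt, htz⟩
          exact ⟨EReal.coe_lt_coe_iff.2 hzt, EReal.coe_lt_coe_iff.2 htz⟩
      rw [hset]
      have hFc : F (z k.castSucc) = c (k.castSucc : ℕ) := hz k.castSucc hcpos hclt
      have hFs : F (z k.succ) = c (k.succ : ℕ) := hz k.succ hsuccpos hsucclt
      have hsp := hsplit (z k.castSucc) (z k.succ) hzz.le
      rw [hIcoIoo, hFc, hFs] at hsp
      rw [hwtk k]
      have hkc : (k.castSucc : ℕ) = (k : ℕ) := rfl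
      have hks : (k.succ : ℕ) = (k : ℕ) + 1 := rfl
      rw [hkc, hks] at hsp
      linarith
end

section
/- If x > 0 satisfies J_ν(x) = 0, then the normalized vector v with entries v_k = f_k(x)/sqrt(Σ_{m=1}^n f_m(x)²) satisfies (T v)_k = (1/x) v_k for k = 1,...,n-1 and |(T v)_n - (1/x) v_n| ≤ δ, where δ = |f_{n+1}(x)| / (2 sqrt((ν+n)(ν+n+1)) · sqrt(Σ_{m=1}^n f_m(x)²)); that is, v is an approximate eigenvector of T with approximate eigenvalue 1/x. -/
open Matrix

/-- The Bessel function of the first kind of real order `ν`, defined for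
`x > 0` by its power series. -/
noncomputable def besselJ (ν x : ℝ) : ℝ :=
  ∑' m : ℕ, ((-1 : ℝ) ^ m / (m.factorial * Real.Gamma (m + ν + 1))) *
    (x / 2) ^ (2 * (m : ℝ) + ν)

/-- The normalized Bessel functions
`f_k(x) = 2^ν Γ(ν+1) sqrt(ν+k) x^{-ν} J_{ν+k}(x)`. -/
noncomputable def normBesselF (ν : ℝ) (k : ℕ) (x : ℝ) : ℝ :=
  (2 : ℝ) ^ ν * Real.Gamma (ν + 1) * Real.sqrt (ν + k) * x ^ (-ν) *
    besselJ (ν + k) x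

lemma besselTerm_abs (ν x : ℝ) (hν : 0 ≤ ν) (hx : 0 < x) (m : ℕ) :
    |((-1 : ℝ) ^ m / (m.factorial * Real.Gamma (m + ν + 1))) * (x / 2) ^ (2 * (m : ℝ) + ν)|
      = (1 / (m.factorial * Real.Gamma (m + ν + 1))) * (x / 2) ^ (2 * (m : ℝ) + ν) := by
  have hΓ : 0 < Real.Gamma (m + ν + 1) := Real.Gamma_pos_of_pos (by positivity)
  have hfac : (0:ℝ) < m.factorial := by positivity
  have hpow : (0:ℝ) < (x / 2) ^ (2 * (m : ℝ) + ν) := Real.rpow_pos_of_pos (by linarith) _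
  rw [abs_mul, abs_div, abs_pow, abs_neg, abs_one, one_pow, abs_of_pos (by positivity),
    abs_of_pos hpow]

lemma summable_besselJ (ν x : ℝ) (hν : 0 ≤ ν) (hx : 0 < x) :
    Summable (fun m : ℕ => ((-1 : ℝ) ^ m / (m.factorial * Real.Gamma (m + ν + 1))) *
      (x / 2) ^ (2 * (m : ℝ) + ν)) := by
  have htpos : 0 < x / 2 := by positivity
  apply summable_of_ratio_norm_eventually_le (r := 1/2) (by norm_num)
  filter_upwards [Filter.eventually_ge_atTop ⌈2 * (x/2) ^ 2⌉₊] with m hm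
  have hΓ : 0 < Real.Gamma (m + ν + 1) := Real.Gamma_pos_of_pos (by positivity)
  have hfac : (0:ℝ) < m.factorial := by positivity
  have h1 : Real.Gamma (↑(m+1) + ν + 1) = (m + ν + 1) * Real.Gamma (m + ν + 1) := by
    push_cast
    rw [show (m:ℝ) + 1 + ν + 1 = ((m:ℝ) + ν + 1) + 1 by ring, Real.Gamma_add_one (by positivity)]
  have h3 : (x/2) ^ ((2 * (m:ℝ) + ν) + 2) = (x/2) ^ (2 * (m:ℝ) + ν) * (x/2) ^ 2 := by
    rw [Real.rpow_add htpos, Real.rpow_two]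
  simp only [Real.norm_eq_abs, besselTerm_abs ν x hν hx]
  rw [show ((2:ℝ) * (↑(m+1):ℝ) + ν) = (2 * (m:ℝ) + ν) + 2 by push_cast; ring, h3, h1]
  rw [show (((m+1).factorial : ℕ) : ℝ) = ((m:ℝ)+1) * m.factorial by
    rw [Nat.factorial_succ]; push_cast; ring]
  have hb : 2 * (x/2) ^ 2 ≤ m + 1 := by
    have h4 : (⌈2 * (x/2) ^ 2⌉₊ : ℝ) ≤ m := by exact_mod_cast hm
    nlinarith [Nat.le_ceil (2 * (x/2) ^ 2)]
  have hm1 : (1:ℝ) ≤ m + ν + 1 := by have : (0:ℝ) ≤ m := Nat.cast_nonneg m; linarith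
  have hpow : 0 < (x/2) ^ (2 * (m:ℝ) + ν) := Real.rpow_pos_of_pos htpos _
  rw [div_mul_eq_mul_div, div_le_iff₀ (by positivity), one_mul]
  have heq : (1:ℝ)/2 * (1 / (↑m.factorial * Real.Gamma (↑m + ν + 1)) * (x / 2) ^ (2 * (m:ℝ) + ν)) *
      (((m:ℝ) + 1) * ↑m.factorial * (((m:ℝ) + ν + 1) * Real.Gamma (↑m + ν + 1)))
      = (x/2) ^ (2 * (m:ℝ) + ν) * (((m:ℝ) + 1) * ((m:ℝ) + ν + 1) / 2) := by
    field_simp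
  rw [heq]
  have hkey : 2 * (x/2)^2 ≤ ((m:ℝ) + 1) * ((m:ℝ) + ν + 1) := by nlinarith
  nlinarith [hpow, hkey, sq_nonneg (x/2)]

lemma besselJ_recurrence (μ x : ℝ) (hμ : 1 ≤ μ) (hx : 0 < x) :
    besselJ (μ - 1) x + besselJ (μ + 1) x = (2 * μ / x) * besselJ μ x := by
  have htpos : (0:ℝ) < x / 2 := by positivity
  set p := fun m : ℕ => ((-1 : ℝ) ^ m / (m.factorial * Real.Gamma (m + (μ-1) + 1))) *
      (x / 2) ^ (2 * (m : ℝ) + (μ-1)) with hp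
  set q := fun m : ℕ => ((-1 : ℝ) ^ m / (m.factorial * Real.Gamma (m + (μ+1) + 1))) *
      (x / 2) ^ (2 * (m : ℝ) + (μ+1)) with hq
  set r := fun m : ℕ => (2 * μ / x) * (((-1 : ℝ) ^ m / (m.factorial * Real.Gamma (m + μ + 1))) *
      (x / 2) ^ (2 * (m : ℝ) + μ)) with hr
  set s := fun m : ℕ => ((-1 : ℝ) ^ m * m / (m.factorial * Real.Gamma (m + μ + 1))) *
      (x / 2) ^ (2 * (m : ℝ) + μ - 1) with hs
  have hsummp : Summable p := summable_besselJ (μ-1) x (by linarith) hx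
  have hsummq : Summable q := summable_besselJ (μ+1) x (by linarith) hx
  have hsummr : Summable r :=
    (summable_besselJ μ x (by linarith) hx).mul_left _
  have hA : ∀ m : ℕ, p m = r m + s m := by
    intro m
    have hΓpos : 0 < Real.Gamma (m + μ) := Real.Gamma_pos_of_pos (by positivity)
    have hΓ1 : Real.Gamma ((m:ℝ) + μ + 1) = ((m:ℝ) + μ) * Real.Gamma ((m:ℝ) + μ) :=
      Real.Gamma_add_one (by positivity)
    have hΓ2 : (m:ℝ) + (μ - 1) + 1 = (m:ℝ) + μ := by ring
    have hx1 : (x/2) ^ (2 * (m:ℝ) + μ) = (x/2) ^ (2 * (m:ℝ) + μ - 1) * (x/2) := by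
      rw [← Real.rpow_add_one (ne_of_gt htpos)]; ring_nf
    have hx2 : 2 * (m:ℝ) + (μ - 1) = 2 * (m:ℝ) + μ - 1 := by ring
    rw [hp, hr, hs]
    simp only [hΓ2, hx2, hx1]
    rw [hΓ1]
    have hfac : (0:ℝ) < m.factorial := by positivity
    field_simp
    ring
  have hB : ∀ m : ℕ, s (m+1) = - q m := by
    intro m
    have h1 : (↑(m+1) : ℝ) + μ + 1 = (m:ℝ) + (μ + 1) + 1 := by push_cast; ring
    have h2 : 2 * (↑(m+1) : ℝ) + μ - 1 = 2 * (m:ℝ) + (μ + 1) := by push_cast; ring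
    rw [hs, hq]
    simp only [h1, h2]
    rw [show (((m+1).factorial : ℕ) : ℝ) = ((m:ℝ)+1) * m.factorial by
      rw [Nat.factorial_succ]; push_cast; ring]
    have hΓpos : 0 < Real.Gamma ((m:ℝ) + (μ+1) + 1) := Real.Gamma_pos_of_pos (by positivity)
    have hfac : (0:ℝ) < m.factorial := by positivity
    rw [pow_succ]
    push_cast
    field_simp
  have hsumms : Summable s := by
    have : s = fun m => p m - r m := by funext m; rw [hA m]; ring
    rw [this]; exact hsummp.sub hsummr
  have hs0 : s 0 = 0 := by simp [hs]
  have htsum : ∑' m, p m = ∑' m, r m + ∑' m, s m := by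
    rw [← Summable.tsum_add hsummr hsumms]; exact tsum_congr hA
  have htsums : ∑' m, s m = - ∑' m, q m := by
    rw [Summable.tsum_eq_zero_add hsumms, hs0, zero_add]
    rw [show (fun m => s (m+1)) = fun m => - q m from funext hB, tsum_neg]
  have hrr : ∑' m, r m = (2 * μ / x) * besselJ μ x := by
    rw [hr, besselJ]; exact tsum_mul_left
  have : besselJ (μ - 1) x = ∑' m, p m := rfl
  rw [this, htsum, htsums, hrr]
  have : besselJ (μ + 1) x = ∑' m, q m := rfl
  rw [this]; ring

lemma normBesselF_rec (ν : ℝ) (hν : 0 ≤ ν) (x : ℝ) (hx : 0 < x)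
    (hzero : besselJ ν x = 0) (j : ℕ) :
    1 / (2 * Real.sqrt ((ν + j) * (ν + j + 1))) * normBesselF ν j x
      + 1 / (2 * Real.sqrt ((ν + j + 1) * (ν + j + 2))) * normBesselF ν (j + 2) x
      = (1 / x) * normBesselF ν (j + 1) x := by
  have hj0 : (0:ℝ) ≤ (j:ℝ) := Nat.cast_nonneg j
  have ha : (0:ℝ) ≤ ν + j := by positivity
  have hb : (0:ℝ) < ν + j + 1 := by positivity
  have hc : (0:ℝ) < ν + j + 2 := by positivity
  have hrec := besselJ_recurrence (ν + j + 1) x (by linarith) hx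
  rw [show ν + (j:ℝ) + 1 - 1 = ν + j by ring, show ν + (j:ℝ) + 1 + 1 = ν + (j:ℝ) + 2 by ring]
    at hrec
  have hS : 0 < Real.sqrt (ν + j + 1) := Real.sqrt_pos.mpr hb
  have hd : Real.sqrt (ν + (j:ℝ) + 1) * Real.sqrt (ν + (j:ℝ) + 1) = ν + (j:ℝ) + 1 :=
    Real.mul_self_sqrt hb.le
  have hA : 1 / (2 * Real.sqrt ((ν + j) * (ν + j + 1))) *
      (Real.sqrt (ν + j) * besselJ (ν + (j:ℝ)) x)
      = 1 / (2 * Real.sqrt (ν + j + 1)) * besselJ (ν + (j:ℝ)) x := by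
    rcases ha.eq_or_lt with h | h
    · have hν0 : ν = 0 := by linarith
      have hJ : besselJ (ν + (j:ℝ)) x = 0 := by
        rw [show ν + (j:ℝ) = ν by linarith]; exact hzero
      simp [hJ]
    · rw [Real.sqrt_mul ha]
      have h2 : 0 < Real.sqrt (ν + j) := Real.sqrt_pos.mpr h
      field_simp
  have hB : 1 / (2 * Real.sqrt ((ν + j + 1) * (ν + j + 2))) *
      (Real.sqrt (ν + (j:ℝ) + 2) * besselJ (ν + (j:ℝ) + 2) x)
      = 1 / (2 * Real.sqrt (ν + j + 1)) * besselJ (ν + (j:ℝ) + 2) x := by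
    rw [Real.sqrt_mul hb.le]
    have h2 : 0 < Real.sqrt (ν + j + 2) := Real.sqrt_pos.mpr hc
    field_simp
  simp only [normBesselF]
  push_cast
  rw [show ν + ((j:ℝ) + 1) = ν + (j:ℝ) + 1 by ring, show ν + ((j:ℝ) + 2) = ν + (j:ℝ) + 2 by ring]
  set K := (2:ℝ) ^ ν * Real.Gamma (ν + 1) * x ^ (-ν) with hK
  set S := Real.sqrt (ν + (j:ℝ) + 1) with hSdef
  have he : S * S⁻¹ = 1 := mul_inv_cancel₀ (ne_of_gt hS)
  linear_combination K * hA + K * hB + (K / (2 * S)) * hrec -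
    (K * besselJ (ν + (j:ℝ) + 1) x / (x * S)) * hd +
    (K * besselJ (ν + (j:ℝ) + 1) x * S / x) * he

lemma tri_mulVec {n : ℕ} (T : Matrix (Fin n) (Fin n) ℝ) (c : ℕ → ℝ)
    (hT : ∀ j k : Fin n, T j k = if (k : ℕ) = (j : ℕ) + 1 then c (j : ℕ)
      else if (j : ℕ) = (k : ℕ) + 1 then c (k : ℕ) else 0)
    (v : Fin n → ℝ) (j : Fin n) :
    T.mulVec v j = (if h : (j : ℕ) + 1 < n then c j * v ⟨(j : ℕ) + 1, h⟩ else 0)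
      + (if h : 0 < (j : ℕ) then
          c ((j : ℕ) - 1) * v ⟨(j : ℕ) - 1, Nat.lt_of_le_of_lt (Nat.sub_le _ _) j.isLt⟩
        else 0) := by
  have hsplit : ∀ k : Fin n,
      (if (k : ℕ) = (j : ℕ) + 1 then c (j : ℕ)
        else if (j : ℕ) = (k : ℕ) + 1 then c (k : ℕ) else 0) * v k
      = (if (k : ℕ) = (j : ℕ) + 1 then c (j : ℕ) * v k else 0)
        + (if (j : ℕ) = (k : ℕ) + 1 then c (k : ℕ) * v k else 0) := by
    intro k
    split_ifs with h1 h2 h3 <;> try ring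
    · omega
  simp only [mulVec, dotProduct]
  simp only [hT]
  rw [Finset.sum_congr rfl (fun k _ => hsplit k), Finset.sum_add_distrib]
  congr 1
  · by_cases h : (j : ℕ) + 1 < n
    · rw [dif_pos h, Finset.sum_eq_single (⟨(j : ℕ) + 1, h⟩ : Fin n)]
      · simp
      · intro b _ hb
        rw [if_neg]
        intro hc
        exact hb (Fin.ext hc)
      · simp
    · rw [dif_neg h, Finset.sum_eq_zero]
      intro k _
      rw [if_neg]
      have := k.isLt
      omega
  · by_cases h : 0 < (j : ℕ)
    · rw [dif_pos h,
        Finset.sum_eq_single (⟨(j : ℕ) - 1, Nat.lt_of_le_of_lt (Nat.sub_le _ _) j.isLt⟩ : Fin n)]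
      · simp only
        rw [if_pos (by omega)]
      · intro b _ hb
        rw [if_neg]
        intro hc
        exact hb (Fin.ext (show (b:ℕ) = (j:ℕ) - 1 by omega))
      · simp
    · rw [dif_neg h, Finset.sum_eq_zero]
      intro k _
      rw [if_neg]
      omega

/-- At a positive zero `x` of `J_ν`, the normalized vector of values
`f_1(x), ..., f_n(x)` is an approximate eigenvector of the tridiagonal matrix
`T`, with approximate eigenvalue `1/x`: the eigenvector equation holds exactly
in the first `n-1` entries, and in the last entry up to the error `δ`. -/
theorem bessel_vector_approximate_eigenvector
    (ν : ℝ) (hν : 0 ≤ ν) (n : ℕ) (hn : 0 < n) (x : ℝ) (hx : 0 < x)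
    (hzero : besselJ ν x = 0)
    (T : Matrix (Fin n) (Fin n) ℝ)
    (hT : ∀ j k : Fin n,
      T j k = if (k : ℕ) = (j : ℕ) + 1 then
          1 / (2 * Real.sqrt ((ν + j + 1) * (ν + j + 2)))
        else if (j : ℕ) = (k : ℕ) + 1 then
          1 / (2 * Real.sqrt ((ν + k + 1) * (ν + k + 2)))
        else 0)
    (hpos : 0 < ∑ m ∈ Finset.range n, (normBesselF ν (m + 1) x) ^ 2)
    (v : Fin n → ℝ)
    (hv : ∀ k : Fin n, v k = normBesselF ν ((k : ℕ) + 1) x /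
      Real.sqrt (∑ m ∈ Finset.range n, (normBesselF ν (m + 1) x) ^ 2))
    (δ : ℝ)
    (hδ : δ = |normBesselF ν (n + 1) x| /
      (2 * Real.sqrt ((ν + n) * (ν + n + 1)) *
        Real.sqrt (∑ m ∈ Finset.range n, (normBesselF ν (m + 1) x) ^ 2))) :
    (∀ k : Fin n, (k : ℕ) + 1 < n → T.mulVec v k = (1 / x) * v k) ∧
    (∀ k : Fin n, (k : ℕ) + 1 = n → |T.mulVec v k - (1 / x) * v k| ≤ δ) := by
  set SS := Real.sqrt (∑ m ∈ Finset.range n, (normBesselF ν (m + 1) x) ^ 2) with hSS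
  have hSSpos : 0 < SS := Real.sqrt_pos.mpr hpos
  set c : ℕ → ℝ := fun i => 1 / (2 * Real.sqrt ((ν + i + 1) * (ν + i + 2))) with hc
  have hT' : ∀ j k : Fin n, T j k = if (k : ℕ) = (j : ℕ) + 1 then c (j : ℕ)
      else if (j : ℕ) = (k : ℕ) + 1 then c (k : ℕ) else 0 := by
    intro j k; rw [hT j k, hc]
  have key := normBesselF_rec ν hν x hx hzero
  have hf0 : normBesselF ν 0 x = 0 := by
    simp [normBesselF, hzero]
  have hmv := tri_mulVec T c hT' v
  constructor
  · intro j hjn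
    rw [hmv j, dif_pos hjn, hv, hv j]
    have hv1 : ((⟨(j : ℕ) + 1, hjn⟩ : Fin n) : ℕ) = (j : ℕ) + 1 := rfl
    rw [hv1]
    by_cases h0 : 0 < (j : ℕ)
    · rw [dif_pos h0, hv]
      have hv2 : ((⟨(j : ℕ) - 1, Nat.lt_of_le_of_lt (Nat.sub_le _ _) j.isLt⟩ : Fin n) : ℕ)
          = (j : ℕ) - 1 := rfl
      rw [hv2, show (j : ℕ) - 1 + 1 = (j : ℕ) from by omega]
      have hkey := key (j : ℕ)
      have hcast : (((j : ℕ) - 1 : ℕ) : ℝ) = ((j : ℕ) : ℝ) - 1 := by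
        push_cast [Nat.cast_sub (by omega : 1 ≤ (j : ℕ))]; ring
      have hc1 : c ((j : ℕ) - 1) = 1 / (2 * Real.sqrt ((ν + (j:ℕ)) * (ν + (j:ℕ) + 1))) := by
        rw [hc]
        simp only
        rw [hcast]
        ring_nf
      have hc2 : c (j : ℕ) = 1 / (2 * Real.sqrt ((ν + (j:ℕ) + 1) * (ν + (j:ℕ) + 2))) := rfl
      rw [hc1, hc2]
      rw [show (j : ℕ) + 1 + 1 = (j : ℕ) + 2 from rfl]
      linear_combination (1 / SS) * hkey
    · rw [dif_neg h0, add_zero]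
      have hj0 : (j : ℕ) = 0 := by omega
      rw [hj0]
      have hkey := key 0
      simp only [Nat.cast_zero, add_zero, zero_add] at hkey
      rw [hf0, mul_zero, zero_add] at hkey
      have hc2 : c 0 = 1 / (2 * Real.sqrt ((ν + 1) * (ν + 2))) := by
        rw [hc]; simp only; norm_num
      rw [hc2]
      have : (0:ℕ) + 1 + 1 = 2 := rfl
      rw [this]
      have hcast0 : ν + ((0:ℕ):ℝ) + 1 = ν + 1 := by norm_num
      linear_combination (1 / SS) * hkey
  · intro j hjn
    rw [hmv j, dif_neg (by omega : ¬((j : ℕ) + 1 < n)), zero_add, hv j, hδ]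
    have hn1 : (1:ℝ) ≤ (n:ℝ) := Nat.one_le_cast.mpr hn
    have hq : 0 < Real.sqrt ((ν + (n:ℝ)) * (ν + (n:ℝ) + 1)) :=
      Real.sqrt_pos.mpr (by nlinarith)
    have hjcast : ((j:ℕ) : ℝ) = (n:ℝ) - 1 := by
      have : ((j:ℕ) : ℝ) + 1 = (n:ℝ) := by exact_mod_cast congrArg (Nat.cast : ℕ → ℝ) hjn
      linarith
    have hcj : c (j:ℕ) = 1 / (2 * Real.sqrt ((ν + (n:ℝ)) * (ν + (n:ℝ) + 1))) := by
      rw [hc]; simp only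
      rw [hjcast]; ring_nf
    have hj2 : (j:ℕ) + 1 + 1 = n + 1 := by omega
    have hstep : ∀ D : ℝ,
        D = -(c (j:ℕ) * (normBesselF ν ((j:ℕ) + 2) x / SS)) →
        |D| ≤ |normBesselF ν (n + 1) x| /
          (2 * Real.sqrt ((ν + (n:ℝ)) * (ν + (n:ℝ) + 1)) * SS) := by
      intro D hD
      rw [hD, abs_neg, show (j:ℕ) + 2 = n + 1 from by omega, hcj, abs_mul,
        abs_of_nonneg (show (0:ℝ) ≤ 1 / (2 * Real.sqrt ((ν + (n:ℝ)) * (ν + (n:ℝ) + 1))) by positivity),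
        abs_div, abs_of_pos hSSpos]
      apply le_of_eq
      field_simp
    by_cases h0 : 0 < (j : ℕ)
    · rw [dif_pos h0, hv]
      have hv2 : ((⟨(j : ℕ) - 1, Nat.lt_of_le_of_lt (Nat.sub_le _ _) j.isLt⟩ : Fin n) : ℕ)
          = (j : ℕ) - 1 := rfl
      rw [hv2, show (j : ℕ) - 1 + 1 = (j : ℕ) from by omega]
      have hcast : (((j : ℕ) - 1 : ℕ) : ℝ) = ((j : ℕ) : ℝ) - 1 := by
        push_cast [Nat.cast_sub (by omega : 1 ≤ (j : ℕ))]; ring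
      have hc1 : c ((j : ℕ) - 1) = 1 / (2 * Real.sqrt ((ν + ((j:ℕ):ℝ)) * (ν + ((j:ℕ):ℝ) + 1))) := by
        rw [hc]; simp only
        rw [hcast]; ring_nf
      have hc2 : c (j : ℕ) = 1 / (2 * Real.sqrt ((ν + ((j:ℕ):ℝ) + 1) * (ν + ((j:ℕ):ℝ) + 2))) := rfl
      apply hstep
      rw [hc1, hc2]
      linear_combination (1 / SS) * key (j : ℕ)
    · rw [dif_neg h0]
      have hj0 : (j : ℕ) = 0 := by omega
      apply hstep
      rw [hj0]
      have hkey := key 0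
      simp only [Nat.cast_zero, add_zero, zero_add] at hkey
      rw [hf0, mul_zero, zero_add] at hkey
      have hc2 : c 0 = 1 / (2 * Real.sqrt ((ν + 1) * (ν + 2))) := by
        rw [hc]; simp only; norm_num
      rw [hc2, show (0:ℕ) + 1 = 1 from rfl, show (0:ℕ) + 2 = 2 from rfl]
      linear_combination (1 / SS) * hkey
end
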